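/- The parabolic branch of eigenvalues satisfies: (a) for every nonzero integer n with μ₀²n² ≥ 4bρ̄, μ₀·|Im(ν_n^p)| ≤ 2ū·(−Re(ν_n^p)); (b) for all distinct nonzero integers n ≠ l with μ₀²n² ≥ 4bρ̄ and μ₀²l² ≥ 4bρ̄, |ν_n^p − ν_l^p| ≥ (μ₀/2)·|n² − l²|; (c) for every nonzero integer n with μ₀²n² ≥ 4bρ̄, (μ₀/2)·n² ≤ |ν_n^p| ≤ (μ₀ + ū)·n². -/

import Mathlib

open scoped Classical
open Complex

/-- The parabolic branch of eigenvalues of the adjoint operator of the linearized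
barotropic compressible Navier–Stokes system. -/
noncomputable def nuP (ρ u b μ : ℝ) (n : ℤ) : ℂ :=
  if 4 * b * ρ ≤ μ ^ 2 * (n : ℝ) ^ 2 then
    (((-(μ * (n : ℝ) ^ 2) - |(n : ℝ)| * Real.sqrt (μ ^ 2 * (n : ℝ) ^ 2 - 4 * b * ρ)) / 2 : ℝ) : ℂ)
      + Complex.I * ((u * (n : ℝ) : ℝ) : ℂ)
  else
    ((-(μ * (n : ℝ) ^ 2) / 2 : ℝ) : ℂ)
      + Complex.I * ((u * (n : ℝ) - (n : ℝ) / 2 * Real.sqrt (4 * b * ρ - μ ^ 2 * (n : ℝ) ^ 2) : ℝ) : ℂ)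

/-! On this branch `ν_n = -(μ n² + |n| √(μ² n² - 4bρ)) / 2 + i u n`. The term
`|n| √(μ² n² - 4bρ)` lies between `0` and `μ n²` and is monotone in `n²`, so `-Re ν_n` lies
between `μ n² / 2` and `μ n²` and increases at least as fast as `μ n² / 2`. Since
`|Im ν_n| = u |n| ≤ u n²`, all three estimates follow from these bounds on the real part,
using `|Re z| ≤ ‖z‖ ≤ |Re z| + |Im z|`. -/

section SqrtTerm

variable {μ c x y : ℝ}

lemma abs_mul_sqrt_sub_le (hc : 0 ≤ c) (hμ : 0 ≤ μ) :
    |x| * √(μ ^ 2 * x ^ 2 - c) ≤ μ * x ^ 2 := by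
  have hsqrt : √(μ ^ 2 * x ^ 2 - c) ≤ μ * |x| := by
    rw [Real.sqrt_le_left (by positivity)]
    nlinarith [sq_abs x]
  calc |x| * √(μ ^ 2 * x ^ 2 - c) ≤ |x| * (μ * |x|) := by gcongr
    _ = μ * x ^ 2 := by rw [← sq_abs x]; ring

lemma abs_mul_sqrt_sub_le_of_sq_le (h : y ^ 2 ≤ x ^ 2) :
    |y| * √(μ ^ 2 * y ^ 2 - c) ≤ |x| * √(μ ^ 2 * x ^ 2 - c) :=
  mul_le_mul (sq_le_sq.mp h) (by gcongr) (Real.sqrt_nonneg _) (abs_nonneg x)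

end SqrtTerm

lemma Int.abs_cast_le_sq (n : ℤ) : |(n : ℝ)| ≤ (n : ℝ) ^ 2 := by
  exact_mod_cast Int.natAbs_le_self_sq n

section ParabolicBranch

variable {ρ u b μ : ℝ} {n l : ℤ}

lemma nuP_re_of_le (h : 4 * b * ρ ≤ μ ^ 2 * (n : ℝ) ^ 2) :
    (nuP ρ u b μ n).re =
      -(μ * (n : ℝ) ^ 2 + |(n : ℝ)| * √(μ ^ 2 * (n : ℝ) ^ 2 - 4 * b * ρ)) / 2 := by
  simp only [nuP, if_pos h, add_re, ofReal_re, mul_re, I_re, I_im, ofReal_im]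
  ring

lemma nuP_im_of_le (h : 4 * b * ρ ≤ μ ^ 2 * (n : ℝ) ^ 2) :
    (nuP ρ u b μ n).im = u * n := by
  simp only [nuP, if_pos h, add_im, ofReal_im, mul_im, I_re, I_im, ofReal_re]
  ring

lemma neg_re_le_norm (z : ℂ) : -z.re ≤ ‖z‖ :=
  (neg_le_abs _).trans (abs_re_le_norm z)

lemma mul_abs_nuP_im_le (hu : 0 ≤ u) (hμ : 0 ≤ μ) (h : 4 * b * ρ ≤ μ ^ 2 * (n : ℝ) ^ 2) :
    μ * |(nuP ρ u b μ n).im| ≤ 2 * u * -(nuP ρ u b μ n).re := by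
  rw [nuP_re_of_le h, nuP_im_of_le h, abs_mul, abs_of_nonneg hu]
  have hsqrt :=
    mul_nonneg (abs_nonneg (n : ℝ)) (Real.sqrt_nonneg (μ ^ 2 * (n : ℝ) ^ 2 - 4 * b * ρ))
  nlinarith [mul_le_mul_of_nonneg_left (Int.abs_cast_le_sq n) (mul_nonneg hμ hu),
    mul_nonneg hu hsqrt]

lemma half_mul_sub_le_norm_nuP_sub (hn : 4 * b * ρ ≤ μ ^ 2 * (n : ℝ) ^ 2)
    (hl : 4 * b * ρ ≤ μ ^ 2 * (l : ℝ) ^ 2) (hln : (l : ℝ) ^ 2 ≤ (n : ℝ) ^ 2) :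
    μ / 2 * ((n : ℝ) ^ 2 - (l : ℝ) ^ 2) ≤ ‖nuP ρ u b μ n - nuP ρ u b μ l‖ := by
  refine le_trans ?_ (neg_re_le_norm _)
  rw [sub_re, nuP_re_of_le hn, nuP_re_of_le hl]
  linarith [abs_mul_sqrt_sub_le_of_sq_le (μ := μ) (c := 4 * b * ρ) hln]

lemma half_mul_abs_sub_le_norm_nuP_sub (hn : 4 * b * ρ ≤ μ ^ 2 * (n : ℝ) ^ 2)
    (hl : 4 * b * ρ ≤ μ ^ 2 * (l : ℝ) ^ 2) :
    μ / 2 * |(n : ℝ) ^ 2 - (l : ℝ) ^ 2| ≤ ‖nuP ρ u b μ n - nuP ρ u b μ l‖ := by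
  rcases le_total ((l : ℝ) ^ 2) ((n : ℝ) ^ 2) with hln | hnl
  · rw [abs_of_nonneg (sub_nonneg.mpr hln)]
    exact half_mul_sub_le_norm_nuP_sub hn hl hln
  · rw [abs_sub_comm, abs_of_nonneg (sub_nonneg.mpr hnl), norm_sub_rev]
    exact half_mul_sub_le_norm_nuP_sub hl hn hnl

lemma half_mul_sq_le_norm_nuP (h : 4 * b * ρ ≤ μ ^ 2 * (n : ℝ) ^ 2) :
    μ / 2 * (n : ℝ) ^ 2 ≤ ‖nuP ρ u b μ n‖ := by
  refine le_trans ?_ (neg_re_le_norm _)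
  rw [nuP_re_of_le h]
  linarith [mul_nonneg (abs_nonneg (n : ℝ)) (Real.sqrt_nonneg (μ ^ 2 * (n : ℝ) ^ 2 - 4 * b * ρ))]

lemma norm_nuP_le (hρ : 0 ≤ ρ) (hu : 0 ≤ u) (hb : 0 ≤ b) (hμ : 0 ≤ μ)
    (h : 4 * b * ρ ≤ μ ^ 2 * (n : ℝ) ^ 2) :
    ‖nuP ρ u b μ n‖ ≤ (μ + u) * (n : ℝ) ^ 2 := by
  have hsqrt : |(n : ℝ)| * √(μ ^ 2 * (n : ℝ) ^ 2 - 4 * b * ρ) ≤ μ * (n : ℝ) ^ 2 :=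
    abs_mul_sqrt_sub_le (by positivity) hμ
  have hre : |(nuP ρ u b μ n).re| ≤ μ * (n : ℝ) ^ 2 := by
    have hnonneg :=
      mul_nonneg (abs_nonneg (n : ℝ)) (Real.sqrt_nonneg (μ ^ 2 * (n : ℝ) ^ 2 - 4 * b * ρ))
    rw [nuP_re_of_le h, abs_le]
    constructor <;> nlinarith [sq_nonneg (n : ℝ)]
  have him : |(nuP ρ u b μ n).im| ≤ u * (n : ℝ) ^ 2 := by
    rw [nuP_im_of_le h, abs_mul, abs_of_nonneg hu]
    exact mul_le_mul_of_nonneg_left (Int.abs_cast_le_sq n) hu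
  calc ‖nuP ρ u b μ n‖ ≤ |(nuP ρ u b μ n).re| + |(nuP ρ u b μ n).im| :=
        norm_le_abs_re_add_abs_im _
    _ ≤ (μ + u) * (n : ℝ) ^ 2 := by linarith

end ParabolicBranch

/-- Properties of the parabolic branch for `μ₀²n² ≥ 4bρ̄`:
(a) `μ₀|Im(ν_n^p)| ≤ 2ū(−Re(ν_n^p))`;
(b) `|ν_n^p − ν_l^p| ≥ (μ₀/2)|n² − l²|` for distinct such `n, l`;
(c) `(μ₀/2)n² ≤ |ν_n^p| ≤ (μ₀ + ū)n²`. -/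
theorem parabolic_branch_properties (ρ u b μ : ℝ) (hρ : 0 < ρ) (hu : 0 < u) (hb : 0 < b)
    (hμ : 0 < μ) :
    (∀ n : ℤ, n ≠ 0 → 4 * b * ρ ≤ μ ^ 2 * (n : ℝ) ^ 2 →
      μ * |(nuP ρ u b μ n).im| ≤ 2 * u * (-(nuP ρ u b μ n).re)) ∧
    (∀ n l : ℤ, n ≠ 0 → l ≠ 0 → n ≠ l → 4 * b * ρ ≤ μ ^ 2 * (n : ℝ) ^ 2 →
      4 * b * ρ ≤ μ ^ 2 * (l : ℝ) ^ 2 →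
      μ / 2 * |(n : ℝ) ^ 2 - (l : ℝ) ^ 2| ≤ ‖nuP ρ u b μ n - nuP ρ u b μ l‖) ∧
    (∀ n : ℤ, n ≠ 0 → 4 * b * ρ ≤ μ ^ 2 * (n : ℝ) ^ 2 →
      μ / 2 * (n : ℝ) ^ 2 ≤ ‖nuP ρ u b μ n‖ ∧
      ‖nuP ρ u b μ n‖ ≤ (μ + u) * (n : ℝ) ^ 2) :=
  ⟨fun _ _ h => mul_abs_nuP_im_le hu.le hμ.le h,
    fun _ _ _ _ _ hn hl => half_mul_abs_sub_le_norm_nuP_sub hn hl,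
    fun _ _ h => ⟨half_mul_sq_le_norm_nuP h, norm_nuP_le hρ.le hu.le hb.le hμ.le h⟩⟩
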